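/- Let L be a first-order language, α a type of variables, f : L.Term α a term, h : L.Term (α ⊕ Fin 2) a term with two distinguished hole variables, and c : ℕ → L.Term α a sequence of terms with |c j| ≤ C for all j, where C ≥ 1. Define g : ℕ → L.Term α by g 0 = f and g (j+1) = the substitution of h sending each variable Sum.inl v to the variable term for v, the hole Sum.inr 0 to g j, and the hole Sum.inr 1 to c j. Then for every ℓ : ℕ, |g ℓ| ≤ |f| * (C * |h|)^ℓ. -/
import Mathlib


open FirstOrder

/-- The size of a first-order term: the total number of nodes, i.e. the number
of variable occurrences plus the number of function-symbol applications. -/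
def termSize {L : FirstOrder.Language} {α : Type*} : L.Term α → ℕ
  | .var _ => 1
  | .func _f ts => 1 + Finset.univ.sum fun i => termSize (ts i)

theorem termSize_pos {L : FirstOrder.Language} {α : Type*} (t : L.Term α) :
    1 ≤ termSize t := by
  cases t with
  | var _ => simp [termSize]
  | func _ ts => simp [termSize]

theorem termSize_subst_le {L : FirstOrder.Language} {α β : Type*}
    (σ : α → L.Term β) (M : ℕ) (hM : 1 ≤ M) (hσ : ∀ v, termSize (σ v) ≤ M) :
    ∀ t : L.Term α, termSize (t.subst σ) ≤ M * termSize t := by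
  intro t
  induction t with
  | var v => simpa [termSize, Language.Term.subst] using hσ v
  | func F ts ih =>
      simp only [Language.Term.subst, termSize, Nat.mul_add, Nat.mul_one]
      have : (Finset.univ.sum fun i => termSize ((ts i).subst σ)) ≤
          Finset.univ.sum fun i => M * termSize (ts i) :=
        Finset.sum_le_sum fun i _ => ih i
      calc 1 + (Finset.univ.sum fun i => termSize ((ts i).subst σ))
          ≤ M + Finset.univ.sum fun i => M * termSize (ts i) :=
            Nat.add_le_add hM this
        _ = M + M * Finset.univ.sum fun i => termSize (ts i) := by
            rw [Finset.mul_sum]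

/-- Unfolding a recursive term: if `g 0 = f` and `g (j+1)` is obtained from `h`
by substituting `g j` for the first hole and `c j` for the second hole (keeping
all other variables), where `|c j| ≤ C` for all `j` and `C ≥ 1`, then
`|g ℓ| ≤ |f| * (C * |h|)^ℓ`. -/
theorem rec_unfold_size {L : FirstOrder.Language} {α : Type*}
    (f : L.Term α) (h : L.Term (α ⊕ Fin 2)) (c : ℕ → L.Term α) (C : ℕ)
    (hC : 1 ≤ C) (hc : ∀ j : ℕ, termSize (c j) ≤ C) (g : ℕ → L.Term α)
    (hg0 : g 0 = f)
    (hgs : ∀ j : ℕ, g (j + 1) =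
      h.subst (Sum.elim FirstOrder.Language.Term.var (fun k => ![g j, c j] k))) :
    ∀ ℓ : ℕ, termSize (g ℓ) ≤ termSize f * (C * termSize h) ^ ℓ := by
  intro ℓ
  induction ℓ with
  | zero => simp [hg0]
  | succ j ih =>
      set M := C * termSize (g j) with hMdef
      have hgj1 : 1 ≤ termSize (g j) := termSize_pos _
      have hM1 : 1 ≤ M := Nat.one_le_iff_ne_zero.mpr (by positivity)
      have hσ : ∀ v, termSize ((Sum.elim FirstOrder.Language.Term.var
          (fun k => ![g j, c j] k) : α ⊕ Fin 2 → L.Term α) v) ≤ M := by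
        rintro (v | k)
        · simpa [termSize] using hM1
        · fin_cases k
          · simpa using Nat.le_mul_of_pos_left _ hC
          · simpa using Nat.mul_le_mul (hc j) hgj1
      have key := termSize_subst_le _ M hM1 hσ h
      rw [hgs j]
      calc termSize (h.subst _) ≤ M * termSize h := key
        _ = termSize (g j) * (C * termSize h) := by ring
        _ ≤ (termSize f * (C * termSize h) ^ j) * (C * termSize h) :=
            Nat.mul_le_mul_right _ ih
        _ = termSize f * (C * termSize h) ^ (j + 1) := by ring
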